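/- (Padberg–Rao, Rizzi's proof) Let G=(V,E) be a finite graph with capacities c: E → ℚ≥0, T ⊆ V with |T| even and T ≠ ∅, and let a Gomory–Hu cut-tree with terminal set T be given (a tree on T together with a map π: V → T fixing T, such that each tree edge x∼y induces the cut U = π⁻¹(X_x) which is a minimum (x,y)-cut in G). Then some T-odd edge of the cut-tree induces a minimum T-cut: min over T-odd U ⊆ V of c(δ(U)) is attained by a cut induced by a T-odd tree edge. -/

import Mathlib

/-!
Fix a minimum `T`-odd cut `X`. Call a tree edge odd if both of its sides contain an odd number
of terminals. The sides of the tree edges at a terminal `x` partition `T \ {x}`, which has odd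
size, so every terminal meets an odd number of odd edges. Since `X ∩ T` is odd, the handshake
lemma yields an odd edge `x∼y` with `x ∈ X` and `y ∉ X`. Its induced cut is a minimum
`(x, y)`-cut and `X` separates `x` from `y`, so that cut is no larger than `δ(X)`.
-/

open scoped Classical

/-- The set of edges of `E` with exactly one endpoint in `U`. -/
noncomputable def cutEdges {V : Type*} [Fintype V] [DecidableEq V]
    (E : Finset (V × V)) (U : Finset V) : Finset (V × V) :=
  E.filter (fun e => (e.1 ∈ U ∧ e.2 ∉ U) ∨ (e.1 ∉ U ∧ e.2 ∈ U))

/-- The vertex set of the component of `x` after deleting the edge `x∼y` from the graph `G`. -/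
def sideSet {X : Type*} (G : SimpleGraph X) (x y : X) : Set X :=
  {z | (G.deleteEdges {s(x, y)}).Reachable x z}

open Finset

namespace SimpleGraph

variable {S : Type*} {G : SimpleGraph S} {x y z : S}

lemma sideSet_swap (G : SimpleGraph S) (x y : S) :
    sideSet G y x = {z | (G.deleteEdges {s(x, y)}).Reachable y z} := by
  rw [sideSet, Sym2.eq_swap]

lemma notMem_sideSet (hG : G.IsAcyclic) (h : G.Adj x y) : y ∉ sideSet G x y :=
  isAcyclic_iff_forall_adj_isBridge.mp hG h

lemma disjoint_sideSet (hG : G.IsAcyclic) (h : G.Adj x y) :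
    Disjoint (sideSet G x y) (sideSet G y x) := by
  rw [sideSet_swap G x y, Set.disjoint_left]
  exact fun z hx hy => notMem_sideSet hG h (hx.trans hy.symm)

lemma Connected.mem_sideSet_or_mem_sideSet (hG : G.Connected) (x y z : S) :
    z ∈ sideSet G x y ∨ z ∈ sideSet G y x := by
  rw [sideSet_swap G x y]
  obtain ⟨P, hP⟩ := hG.exists_isPath z x
  by_cases hxy : s(x, y) ∈ P.edges
  · have hyP := P.snd_mem_support_of_mem_edges hxy
    have hxP := Walk.endpoint_notMem_support_takeUntil hP hyP (P.adj_of_mem_edges hxy).ne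
    refine Or.inr ⟨((P.takeUntil y hyP).toDeleteEdges {s(x, y)} fun e he hxy' => ?_).reverse⟩
    rw [Set.mem_singleton_iff.mp hxy'] at he
    exact hxP ((P.takeUntil y hyP).fst_mem_support_of_mem_edges he)
  · refine Or.inl ⟨(P.toDeleteEdges {s(x, y)} fun e he hxy' => ?_).reverse⟩
    exact hxy (Set.mem_singleton_iff.mp hxy' ▸ he)

lemma Connected.exists_adj_mem_sideSet (hG : G.Connected) (hz : z ≠ x) :
    ∃ y, G.Adj x y ∧ z ∈ sideSet G y x := by
  obtain ⟨P, hP⟩ := hG.exists_isPath x z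
  cases P with
  | nil => exact absurd rfl hz
  | @cons _ y _ hxy Q =>
    refine ⟨y, hxy, ⟨Q.toDeleteEdges {s(y, x)} fun e he hyx => ?_⟩⟩
    rw [Set.mem_singleton_iff.mp hyx] at he
    exact ((Walk.cons_isPath_iff _ _).mp hP).2 (Q.snd_mem_support_of_mem_edges he)

lemma IsAcyclic.eq_of_mem_sideSet {y' : S} (hG : G.IsAcyclic) (hy : G.Adj x y) (hy' : G.Adj x y')
    (hz : z ∈ sideSet G y x) (hz' : z ∈ sideSet G y' x) : y = y' := by
  -- A walk from `y'` to `z` avoiding the edge `x∼y'` never visits `x`, so it also avoids `x∼y`;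
  -- then `y, z, y', x` joins the two ends of the bridge `x∼y` in `G` minus that edge.
  by_contra hne
  obtain ⟨w⟩ := hz'
  have hx : x ∉ w.support := fun hx => notMem_sideSet hG hy'.symm ⟨w.takeUntil x hx⟩
  let w' : G.Walk y' z := w.mapLe (deleteEdges_le _)
  have hy'z : (G.deleteEdges {s(y, x)}).Reachable y' z := by
    refine ⟨w'.toDeleteEdges {s(y, x)} fun e he hyx => hx ?_⟩
    rw [Set.mem_singleton_iff.mp hyx] at he
    simpa [w'] using w'.snd_mem_support_of_mem_edges he
  have hxy' : (G.deleteEdges {s(y, x)}).Adj x y' := by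
    simp [hy', Ne.symm hne, hy'.ne']
  exact notMem_sideSet hG hy.symm (hz.trans (hy'z.symm.trans hxy'.reachable.symm))

variable [Fintype S]

lemma IsTree.card_sideSet_add_card_sideSet (hG : G.IsTree) (h : G.Adj x y) :
    #{z | z ∈ sideSet G x y} + #{z | z ∈ sideSet G y x} = Fintype.card S := by
  rw [← card_union_of_disjoint, ← card_univ, ← filter_or, filter_true_of_mem]
  · exact fun z _ => hG.connected.mem_sideSet_or_mem_sideSet x y z
  · exact disjoint_filter_filter' _ _ (disjoint_sideSet hG.isAcyclic h)

lemma IsTree.sum_card_sideSet (hG : G.IsTree) (x : S) :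
    ∑ y ∈ G.neighborFinset x, #{z | z ∈ sideSet G y x} = Fintype.card S - 1 := by
  rw [← card_biUnion, ← card_univ, ← card_erase_of_mem (mem_univ x)]
  · congr 1
    ext z
    simp only [mem_biUnion, mem_neighborFinset, mem_filter_univ, mem_erase, mem_univ, and_true]
    refine ⟨?_, hG.connected.exists_adj_mem_sideSet⟩
    rintro ⟨y, hy, hz⟩ rfl
    exact notMem_sideSet hG.isAcyclic hy.symm hz
  · intro y hy y' hy' hne
    refine disjoint_filter.mpr fun z _ hz hz' => hne ?_
    exact hG.isAcyclic.eq_of_mem_sideSet ((mem_neighborFinset ..).mp hy)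
      ((mem_neighborFinset ..).mp hy') hz hz'

lemma exists_adj_notMem_of_odd_degree [DecidableRel G.Adj] {A : Finset S} (hA : Odd #A)
    (hdeg : ∀ x ∈ A, Odd (G.degree x)) : ∃ x ∈ A, ∃ y ∉ A, G.Adj x y := by
  by_contra! hclosed
  let H : SimpleGraph S :=
    { Adj x y := G.Adj x y ∧ x ∈ A ∧ y ∈ A
      symm := ⟨fun _ _ h => ⟨h.1.symm, h.2.2, h.2.1⟩⟩
      loopless := ⟨fun x h => G.loopless.irrefl x h.1⟩ }
  have hH : ∀ x, H.neighborFinset x = if x ∈ A then G.neighborFinset x else ∅ := by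
    intro x
    ext y
    split_ifs with hx
    · simp only [mem_neighborFinset, H, hx, true_and, and_iff_left_iff_imp]
      exact fun hxy => by_contra fun hy => hclosed x hx y hy hxy
    · simp [H, hx]
  have hodd : ({v | Odd (H.degree v)} : Finset S) = A := by
    ext x
    simp only [mem_filter_univ, ← card_neighborFinset_eq_degree, hH]
    split_ifs with hx
    · simpa [hx] using hdeg x hx
    · simp [hx]
  exact Nat.not_even_iff_odd.mpr hA (hodd ▸ H.even_card_odd_degree_vertices)

@[simps]
def oddSideGraph (G : SimpleGraph S) : SimpleGraph S where
  Adj x y := G.Adj x y ∧ Odd #{z | z ∈ sideSet G x y} ∧ Odd #{z | z ∈ sideSet G y x}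
  symm := ⟨fun _ _ h => ⟨h.1.symm, h.2.2, h.2.1⟩⟩
  loopless := ⟨fun x h => G.loopless.irrefl x h.1⟩

lemma IsTree.odd_degree_oddSideGraph (hG : G.IsTree) (heven : Even (Fintype.card S)) (x : S) :
    Odd ((oddSideGraph G).degree x) := by
  have hside : ∀ y, G.Adj x y →
      (Odd #{z | z ∈ sideSet G x y} ↔ Odd #{z | z ∈ sideSet G y x}) := fun y hxy => by
    have := Nat.even_add.mp (hG.card_sideSet_add_card_sideSet hxy ▸ heven)
    rwa [← Nat.not_even_iff_odd, ← Nat.not_even_iff_odd, not_iff_not]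
  have hdeg : (oddSideGraph G).neighborFinset x =
      {y ∈ G.neighborFinset x | Odd #{z | z ∈ sideSet G y x}} := by
    ext y
    simp only [mem_neighborFinset, mem_filter, oddSideGraph_adj]
    exact ⟨fun h => ⟨h.1, h.2.2⟩, fun h => ⟨h.1, (hside y h.1).mpr h.2, h.2⟩⟩
  have := hG.connected.nonempty
  rw [← card_neighborFinset_eq_degree, hdeg, ← Finset.odd_sum_iff_odd_card_odd,
    hG.sum_card_sideSet]
  exact Nat.Even.sub_odd Fintype.card_pos heven odd_one

lemma IsTree.exists_adj_notMem_odd_card_sideSet (hG : G.IsTree) (heven : Even (Fintype.card S))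
    {A : Finset S} (hA : Odd #A) :
    ∃ x ∈ A, ∃ y ∉ A, G.Adj x y ∧ Odd #{z | z ∈ sideSet G x y} := by
  obtain ⟨x, hx, y, hy, hxy, hodd, -⟩ := exists_adj_notMem_of_odd_degree hA
    fun x _ => hG.odd_degree_oddSideGraph heven x
  exact ⟨x, hx, y, hy, hxy, hodd⟩

end SimpleGraph

lemma Finset.card_filter_univ_subtype {V : Type*} {T : Finset V} (p : V → Prop)
    [DecidablePred p] : #{t : T | p t.val} = #{v ∈ T | p v} := by
  rw [univ_eq_attach, ← card_map (Function.Embedding.subtype _), filter_attach]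
  simp

theorem stmt_4_general {V : Type*} [Fintype V] [DecidableEq V]
    (E : Finset (V × V)) (c : V × V → ℚ)
    (T : Finset V) (hTeven : Even T.card)
    (τ : SimpleGraph {t : V // t ∈ T}) (hτ : τ.IsTree)
    (π : V → {t : V // t ∈ T}) (hπ : ∀ t : {t : V // t ∈ T}, π t.val = t)
    (hmin : ∀ x y : {t : V // t ∈ T}, τ.Adj x y →
      ∀ W : Finset V, (x : V) ∈ W → (y : V) ∉ W →
        (cutEdges E (Finset.univ.filter (fun v => π v ∈ sideSet τ x y))).sum c ≤
          (cutEdges E W).sum c) :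
    ∃ x y : {t : V // t ∈ T}, τ.Adj x y ∧
      Odd ((T ∩ Finset.univ.filter (fun v => π v ∈ sideSet τ x y)).card) ∧
      ∀ W : Finset V, Odd ((T ∩ W).card) →
        (cutEdges E (Finset.univ.filter (fun v => π v ∈ sideSet τ x y))).sum c ≤
          (cutEdges E W).sum c := by
  obtain ⟨X, hXodd, hXmin⟩ : ∃ X : Finset V, Odd #(T ∩ X) ∧
      ∀ W : Finset V, Odd #(T ∩ W) → (cutEdges E X).sum c ≤ (cutEdges E W).sum c := by
    obtain ⟨t⟩ := hτ.connected.nonempty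
    obtain ⟨X, hX, hXmin⟩ := exists_min_image {W : Finset V | Odd #(T ∩ W)}
      (fun W => (cutEdges E W).sum c) ⟨{t.val}, by simp [t.2]⟩
    exact ⟨X, (mem_filter.mp hX).2, fun W hW => hXmin W (by simpa using hW)⟩
  obtain ⟨x, hx, y, hy, hxy, hodd⟩ := hτ.exists_adj_notMem_odd_card_sideSet
    (by simpa using hTeven) (A := {t | t.val ∈ X})
    (by rwa [← filter_mem_eq_inter, ← card_filter_univ_subtype] at hXodd)
  refine ⟨x, y, hxy, ?_, fun W hW => (hmin x y hxy X ?_ ?_).trans (hXmin W hW)⟩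
  · rw [inter_filter, inter_univ, ← card_filter_univ_subtype]
    simpa only [hπ] using hodd
  · simpa using hx
  · simpa using hy

/-- (Padberg–Rao / Rizzi.)  Given a Gomory–Hu cut-tree with terminal set `T`
(a tree `τ` on `T` with a map `π : V → T` fixing `T`, such that the cut induced by
each tree edge is a minimum cut separating its endpoints), some `T`-odd edge of the
cut-tree induces a minimum `T`-cut. -/
theorem stmt_4 {V : Type*} [Fintype V] [DecidableEq V]
    (E : Finset (V × V)) (c : V × V → ℚ) (hc : ∀ e, 0 ≤ c e)
    (T : Finset V) (hTeven : Even T.card) (hTne : T.Nonempty)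
    (τ : SimpleGraph {t : V // t ∈ T}) (hτ : τ.IsTree)
    (π : V → {t : V // t ∈ T}) (hπ : ∀ t : {t : V // t ∈ T}, π t.val = t)
    (hmin : ∀ x y : {t : V // t ∈ T}, τ.Adj x y →
      ∀ W : Finset V, (x : V) ∈ W → (y : V) ∉ W →
        (cutEdges E (Finset.univ.filter (fun v => π v ∈ sideSet τ x y))).sum c ≤
          (cutEdges E W).sum c) :
    ∃ x y : {t : V // t ∈ T}, τ.Adj x y ∧
      Odd ((T ∩ Finset.univ.filter (fun v => π v ∈ sideSet τ x y)).card) ∧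
      ∀ W : Finset V, Odd ((T ∩ W).card) →
        (cutEdges E (Finset.univ.filter (fun v => π v ∈ sideSet τ x y))).sum c ≤
          (cutEdges E W).sum c :=
  stmt_4_general E c T hTeven τ hτ π hπ hmin
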